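/- arXiv:1210.4728 — 2 statements merged into one kernel-verified Lean document; each statement's English description precedes it below -/
import Mathlib

section
/- Let F be a symmetric biset family on V, let a ∈ V be a node with a ∉ Γ(X̂) = X⁺ \ X for every X̂ ∈ F, and let U be a transversal of F. Then the star I = {au : u ∈ U} covers F. -/
variable {V : Type*} [DecidableEq V] [Fintype V]

/-- A biset on `V`: a pair `(X, X⁺)` with `X ⊆ X⁺`. -/
structure Biset (V : Type*) [DecidableEq V] where
  inner : Finset V
  outer : Finset V
  subset : inner ⊆ outer

/-- The boundary `Γ(X̂) = X⁺ \ X` of a biset. -/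
def boundary (B : Biset V) : Finset V := B.outer \ B.inner

/-- An edge with endpoints `u, v` covers a biset if one endpoint lies in the
inner part and the other outside the outer part. -/
def CoversEdge (u v : V) (B : Biset V) : Prop :=
  (u ∈ B.inner ∧ v ∉ B.outer) ∨ (v ∈ B.inner ∧ u ∉ B.outer)

/-- A biset family is symmetric if it is closed under taking the
complement biset `(V \ X⁺, V \ X)`. -/
def SymmetricFamily (𝓕 : Set (Biset V)) : Prop :=
  ∀ B ∈ 𝓕, (⟨B.outerᶜ, B.innerᶜ, by
    simpa using Finset.compl_subset_compl.mpr B.subset⟩ : Biset V) ∈ 𝓕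

/-- if `𝓕` is a symmetric biset family, `a` avoids the boundary of
every member of `𝓕`, and `U` is a transversal of `𝓕`, then the star
`I = {au : u ∈ U}` covers `𝓕`. -/
theorem star_covers_of_symmetric (𝓕 : Set (Biset V)) (U : Finset V) (a : V)
    (hsym : SymmetricFamily 𝓕)
    (ha : ∀ B ∈ 𝓕, a ∉ boundary B)
    (htrans : ∀ B ∈ 𝓕, ∃ u ∈ U, u ∈ B.inner) :
    ∀ B ∈ 𝓕, ∃ u ∈ U, CoversEdge a u B := by
  intro B hB
  have hab := ha B hB
  simp only [boundary, Finset.mem_sdiff, not_and, not_not] at hab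
  by_cases hout : a ∈ B.outer
  · -- a ∈ B.inner; use transversal on complement biset
    have hin := hab hout
    obtain ⟨u, hu, huin⟩ := htrans _ (hsym B hB)
    simp only [Finset.mem_compl] at huin
    exact ⟨u, hu, Or.inl ⟨hin, huin⟩⟩
  · obtain ⟨u, hu, huin⟩ := htrans B hB
    exact ⟨u, hu, Or.inr ⟨huin, hout⟩⟩
end

section
/- Let p_u ≥ q_u for every u ∈ S. Then the (S,v)-(p,q)-connectivity satisfies: λ^{p,q}_G(S,v) = p_v + λ^q_G(S,v) if v ∈ S, and λ^{p,q}_G(S,v) = λ^q_G(S,v) if v ∉ S, where λ^q_G(S,v) is the maximum flow value from S \ {v} to v under node capacities q and unit edge capacities. -/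
/-!
Both connectivities are minima of cut values over bisets `(X, X⁺)` with `v ∉ X⁺`. Enlarging `X⁺`
by the vertices of `S \ {v}` it misses removes their super-source edges (cost `p`) from the cut
and adds them to the boundary `X⁺ \ X` (cost `q ≤ p`), and it cuts no new edge of `E`. Hence an
optimal biset may be assumed to contain `S \ {v}`, and then the only super-source edges it cuts
are the `p_v` ones at `v`, present exactly when `v ∈ S`.
-/

open Finset

variable {V : Type*} [DecidableEq V] [Fintype V]

/-- The `(S,v)`-`(p,q)`-connectivity of a graph with edge set `E`, node
capacities `q`, and flow supplies `p`: the maximum flow value from a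
super-source `s` (joined to each `u ∈ S` by `p_u` parallel edges) to `v`, with
unit edge capacities and node capacities `q`.  By the (node-capacitated)
max-flow min-cut theorem it equals the minimum, over bisets `(X, X⁺)` with
`v ∉ X⁺`, of `q(X⁺ \ X)` plus the number of edges of `E` from `X` to `V \ X⁺`
plus `p(S \ X⁺)` (the super-source edges cut), which we take as the
definition. -/
noncomputable def lamPQ (E : Finset (V × V)) (p q : V → ℕ∞) (S : Finset V) (v : V) : ℕ∞ :=
  sInf {n : ℕ∞ | ∃ X Xp : Finset V, X ⊆ Xp ∧ v ∉ Xp ∧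
    n = (∑ u ∈ Xp \ X, q u) +
        ((E.filter (fun e => e.1 ∈ X ∧ e.2 ∉ Xp)).card : ℕ∞) +
        (∑ u ∈ S \ Xp, p u)}

/-- The `(S,v)`-`q`-connectivity `λ^q_G(S,v)`: the maximum flow value from
`S \ {v}` to `v` in `G` itself, under node capacities `q` and unit edge
capacities; by the node-capacitated max-flow min-cut theorem it equals the
minimum, over bisets `(X, X⁺)` with `S \ {v} ⊆ X⁺` and `v ∉ X⁺`, of
`q(X⁺ \ X)` plus the number of edges from `X` to `V \ X⁺`. -/
noncomputable def lamQset (E : Finset (V × V)) (q : V → ℕ∞) (S : Finset V) (v : V) : ℕ∞ :=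
  sInf {n : ℕ∞ | ∃ X Xp : Finset V, X ⊆ Xp ∧ v ∉ Xp ∧ S \ {v} ⊆ Xp ∧
    n = (∑ u ∈ Xp \ X, q u) +
        ((E.filter (fun e => e.1 ∈ X ∧ e.2 ∉ Xp)).card : ℕ∞)}

section Cuts

variable {α : Type*} [DecidableEq α]

def bisetCut (E : Finset (α × α)) (q : α → ℕ∞) (X Xp : Finset α) : ℕ∞ :=
  (∑ u ∈ Xp \ X, q u) + ((E.filter (fun e => e.1 ∈ X ∧ e.2 ∉ Xp)).card : ℕ∞)

theorem bisetCut_union_le (E : Finset (α × α)) (q : α → ℕ∞) (X Xp T : Finset α) :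
    bisetCut E q X (Xp ∪ T) ≤ bisetCut E q X Xp + ∑ u ∈ T, q u := by
  have hsum : ∑ u ∈ (Xp ∪ T) \ X, q u ≤ (∑ u ∈ Xp \ X, q u) + ∑ u ∈ T, q u :=
    calc ∑ u ∈ (Xp ∪ T) \ X, q u
        ≤ ∑ u ∈ (Xp \ X) ∪ T, q u := sum_le_sum_of_subset (by grind)
      _ ≤ ∑ u ∈ (Xp \ X) ∪ T, q u + ∑ u ∈ (Xp \ X) ∩ T, q u := le_self_add
      _ = (∑ u ∈ Xp \ X, q u) + ∑ u ∈ T, q u := sum_union_inter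
  have hcard : ((E.filter (fun e => e.1 ∈ X ∧ e.2 ∉ Xp ∪ T)).card : ℕ∞) ≤
      (E.filter (fun e => e.1 ∈ X ∧ e.2 ∉ Xp)).card :=
    Nat.cast_le.mpr <| card_le_card <| monotone_filter_right _ fun e he => by grind
  unfold bisetCut
  calc _ ≤ (∑ u ∈ Xp \ X, q u) + (∑ u ∈ T, q u) +
        ((E.filter (fun e => e.1 ∈ X ∧ e.2 ∉ Xp)).card : ℕ∞) := add_le_add hsum hcard
    _ = _ := add_right_comm _ _ _

theorem sum_sdiff_eq_sum_inter_singleton_add {β : Type*} [AddCommMonoid β] (f : α → β)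
    {S Xp : Finset α} {v : α} (hv : v ∉ Xp) :
    ∑ u ∈ S \ Xp, f u = ∑ u ∈ S ∩ {v}, f u + ∑ u ∈ (S \ {v}) \ Xp, f u := by
  rw [← sum_union (disjoint_left.mpr (by grind))]
  congr 1
  grind

theorem lamPQ_le_add_lamQset (E : Finset (α × α)) (p q : α → ℕ∞) (S : Finset α) (v : α) :
    lamPQ E p q S v ≤ ∑ u ∈ S ∩ {v}, p u + lamQset E q S v := by
  rw [lamQset, ENat.add_sInf]
  refine le_iInf₂ fun _ ⟨X, Xp, hX, hv, hS, hn⟩ => sInf_le ⟨X, Xp, hX, hv, ?_⟩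
  have hSXp : (S \ {v}) \ Xp = ∅ := sdiff_eq_empty_iff_subset.mpr hS
  rw [hn, sum_sdiff_eq_sum_inter_singleton_add p hv, hSXp, sum_empty, add_zero, add_comm]

theorem add_lamQset_le_lamPQ (E : Finset (α × α)) (p q : α → ℕ∞) (S : Finset α) (v : α)
    (hpq : ∀ u ∈ S, q u ≤ p u) :
    ∑ u ∈ S ∩ {v}, p u + lamQset E q S v ≤ lamPQ E p q S v := by
  refine le_sInf fun _ ⟨X, Xp, hX, hv, hn⟩ => ?_
  set T := (S \ {v}) \ Xp
  have hcut : lamQset E q S v ≤ bisetCut E q X (Xp ∪ T) :=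
    sInf_le ⟨X, Xp ∪ T, hX.trans subset_union_left, by grind, by grind, rfl⟩
  have hT : ∑ u ∈ T, q u ≤ ∑ u ∈ T, p u := sum_le_sum fun u hu => hpq u (by grind)
  calc ∑ u ∈ S ∩ {v}, p u + lamQset E q S v
      ≤ ∑ u ∈ S ∩ {v}, p u + (bisetCut E q X Xp + ∑ u ∈ T, q u) := by
        gcongr; exact hcut.trans (bisetCut_union_le E q X Xp T)
    _ ≤ ∑ u ∈ S ∩ {v}, p u + (bisetCut E q X Xp + ∑ u ∈ T, p u) := by gcongr
    _ = _ := by rw [hn, sum_sdiff_eq_sum_inter_singleton_add (S := S) p hv, bisetCut]; ring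

theorem lamPQ_eq_sum_inter_singleton_add_lamQset (E : Finset (α × α)) (p q : α → ℕ∞)
    (S : Finset α) (v : α) (hpq : ∀ u ∈ S, q u ≤ p u) :
    lamPQ E p q S v = ∑ u ∈ S ∩ {v}, p u + lamQset E q S v :=
  (lamPQ_le_add_lamQset E p q S v).antisymm (add_lamQset_le_lamPQ E p q S v hpq)

end Cuts

/-- if `p_u ≥ q_u` for every `u ∈ S`, then
`λ^{p,q}_G(S,v) = p_v + λ^q_G(S,v)` when `v ∈ S`, and
`λ^{p,q}_G(S,v) = λ^q_G(S,v)` when `v ∉ S`. -/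
theorem lamPQ_eq_lamQ (E : Finset (V × V)) (p q : V → ℕ∞) (S : Finset V) (v : V)
    (hpq : ∀ u ∈ S, q u ≤ p u) :
    (v ∈ S → lamPQ E p q S v = p v + lamQset E q S v) ∧
    (v ∉ S → lamPQ E p q S v = lamQset E q S v) := by
  rw [lamPQ_eq_sum_inter_singleton_add_lamQset E p q S v hpq]
  constructor
  · intro hv
    rw [inter_singleton_of_mem hv, sum_singleton]
  · intro hv
    rw [inter_singleton_of_notMem hv, sum_empty, zero_add]
end
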